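/- Let A{_τ×_σ}B be a smash biproduct bialgebra with σ right conormal. Then for all a,a'∈A and b∈B: Σ b_τ ⊗ (aa')_τ = Σ 1_{Bτ₁}b_{τ₂} ⊗ a_{τ₁}a'_{τ₂}, where on the left τ is applied to aa'⊗b, and on the right τ₁ is applied to a⊗1_B and τ₂ to a'⊗b. -/

import Mathlib

open TensorProduct

noncomputable section

variable (k : Type*) [Field k]

/-- Componentwise multiplication on `H ⊗ H` induced by a multiplication map `m` on `H`. -/
def mul2 (H : Type*) [AddCommGroup H] [Module k H] (m : H ⊗[k] H →ₗ[k] H) :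
    (H ⊗[k] H) ⊗[k] (H ⊗[k] H) →ₗ[k] H ⊗[k] H :=
  (TensorProduct.map m m) ∘ₗ (TensorProduct.tensorTensorTensorComm k H H H H).toLinearMap

/-- Componentwise multiplication on `H ⊗ (H ⊗ H)`. -/
def mul3 (H : Type*) [AddCommGroup H] [Module k H] (m : H ⊗[k] H →ₗ[k] H) :
    (H ⊗[k] (H ⊗[k] H)) ⊗[k] (H ⊗[k] (H ⊗[k] H)) →ₗ[k] H ⊗[k] (H ⊗[k] H) :=
  (TensorProduct.map m (mul2 k H m)) ∘ₗ
    (TensorProduct.tensorTensorTensorComm k H (H ⊗[k] H) H (H ⊗[k] H)).toLinearMap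

/-- `R ∈ H ⊗ H` is a quasitriangular structure with respect to the bialgebra
structure data `(m, Δ, e, ε)` on `H`:
(QT1) `(ε⊗id)(R) = e = (id⊗ε)(R)`, (QT2) `(Δ⊗id)(R) = R₁₃R₂₃`,
(QT3) `(id⊗Δ)(R) = R₁₃R₁₂`, (QT4) `RΔ(h) = Δᶜᵒᵖ(h)R`. -/
def IsQT (H : Type*) [AddCommGroup H] [Module k H]
    (m : H ⊗[k] H →ₗ[k] H) (Δ : H →ₗ[k] H ⊗[k] H) (e : H) (ε : H →ₗ[k] k)
    (R : H ⊗[k] H) : Prop :=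
  (TensorProduct.lid k H) ((LinearMap.rTensor H ε) R) = e ∧
  (TensorProduct.rid k H) ((LinearMap.lTensor H ε) R) = e ∧
  (TensorProduct.assoc k H H H).toLinearMap ((LinearMap.rTensor H Δ) R) =
    mul3 k H m (((LinearMap.lTensor H (TensorProduct.mk k H H e)) R) ⊗ₜ[k] (e ⊗ₜ[k] R)) ∧
  (LinearMap.lTensor H Δ) R =
    mul3 k H m (((LinearMap.lTensor H (TensorProduct.mk k H H e)) R) ⊗ₜ[k]
      ((LinearMap.lTensor H ((TensorProduct.mk k H H).flip e)) R)) ∧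
  ∀ h : H, mul2 k H m (R ⊗ₜ[k] Δ h) =
    mul2 k H m ((TensorProduct.comm k H H (Δ h)) ⊗ₜ[k] R)

variable (A B : Type*)
  [Ring A] [Algebra k A] [Coalgebra k A]
  [Ring B] [Algebra k B] [Coalgebra k B]

variable (σ : B ⊗[k] A →ₗ[k] A ⊗[k] B) (τ : A ⊗[k] B →ₗ[k] B ⊗[k] A)

/-- The smash product multiplication `(a⊗b)(a'⊗b') = Σ aa'_σ ⊗ b_σ b'` on `A ⊗ B`. -/
def smashMul : (A ⊗[k] B) ⊗[k] (A ⊗[k] B) →ₗ[k] A ⊗[k] B :=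
  (TensorProduct.map (LinearMap.mul' k A) (LinearMap.mul' k B))
    ∘ₗ (TensorProduct.assoc k A A (B ⊗[k] B)).symm.toLinearMap
    ∘ₗ (TensorProduct.map LinearMap.id
         ((TensorProduct.assoc k A B B).toLinearMap
           ∘ₗ (TensorProduct.map σ LinearMap.id)
           ∘ₗ (TensorProduct.assoc k B A B).symm.toLinearMap))
    ∘ₗ (TensorProduct.assoc k A B (A ⊗[k] B)).toLinearMap

/-- The smash coproduct comultiplication `Δ(a⊗b) = Σ a₍₁₎ ⊗ b₍₁₎τ ⊗ a₍₂₎τ ⊗ b₍₂₎` on `A ⊗ B`. -/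
def smashComul : A ⊗[k] B →ₗ[k] (A ⊗[k] B) ⊗[k] (A ⊗[k] B) :=
  (TensorProduct.assoc k A B (A ⊗[k] B)).symm.toLinearMap
    ∘ₗ (TensorProduct.map LinearMap.id
         ((TensorProduct.assoc k B A B).toLinearMap
           ∘ₗ (TensorProduct.map τ LinearMap.id)
           ∘ₗ (TensorProduct.assoc k A B B).symm.toLinearMap))
    ∘ₗ (TensorProduct.assoc k A A (B ⊗[k] B)).toLinearMap
    ∘ₗ (TensorProduct.map (Coalgebra.comul : A →ₗ[k] A ⊗[k] A)
          (Coalgebra.comul : B →ₗ[k] B ⊗[k] B))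

/-- The counit `ε_A ⊗ ε_B` of `A ⊗ B`. -/
def smashCounit : A ⊗[k] B →ₗ[k] k :=
  (LinearMap.mul' k k) ∘ₗ
    TensorProduct.map (Coalgebra.counit : A →ₗ[k] k) (Coalgebra.counit : B →ₗ[k] k)

/-- The projection `π_A = id_A ⊗ ε_B`. -/
def piA : A ⊗[k] B →ₗ[k] A :=
  (TensorProduct.rid k A).toLinearMap ∘ₗ LinearMap.lTensor A (Coalgebra.counit : B →ₗ[k] k)

/-- The projection `π_B = ε_A ⊗ id_B`. -/
def piB : A ⊗[k] B →ₗ[k] B :=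
  (TensorProduct.lid k B).toLinearMap ∘ₗ LinearMap.rTensor B (Coalgebra.counit : A →ₗ[k] k)

/-- `A {_τ×_σ} B` is a smash biproduct bialgebra. -/
structure IsSmashBiproduct : Prop where
  mul_assoc : ∀ x y z : A ⊗[k] B,
    smashMul k A B σ ((smashMul k A B σ (x ⊗ₜ[k] y)) ⊗ₜ[k] z)
      = smashMul k A B σ (x ⊗ₜ[k] (smashMul k A B σ (y ⊗ₜ[k] z)))
  one_mul : ∀ x : A ⊗[k] B, smashMul k A B σ (((1:A) ⊗ₜ[k] (1:B)) ⊗ₜ[k] x) = x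
  mul_one : ∀ x : A ⊗[k] B, smashMul k A B σ (x ⊗ₜ[k] ((1:A) ⊗ₜ[k] (1:B))) = x
  sigma_one_left : ∀ b : B, σ (b ⊗ₜ[k] (1:A)) = (1:A) ⊗ₜ[k] b
  sigma_one_right : ∀ a : A, σ ((1:B) ⊗ₜ[k] a) = a ⊗ₜ[k] (1:B)
  comul_coassoc : ∀ x : A ⊗[k] B,
    (TensorProduct.assoc k (A ⊗[k] B) (A ⊗[k] B) (A ⊗[k] B)).toLinearMap
        ((LinearMap.rTensor (A ⊗[k] B) (smashComul k A B τ)) (smashComul k A B τ x))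
      = (LinearMap.lTensor (A ⊗[k] B) (smashComul k A B τ)) (smashComul k A B τ x)
  counit_comul : ∀ x : A ⊗[k] B,
    (TensorProduct.lid k (A ⊗[k] B))
        ((LinearMap.rTensor (A ⊗[k] B) (smashCounit k A B)) (smashComul k A B τ x)) = x
  comul_counit : ∀ x : A ⊗[k] B,
    (TensorProduct.rid k (A ⊗[k] B))
        ((LinearMap.lTensor (A ⊗[k] B) (smashCounit k A B)) (smashComul k A B τ x)) = x
  tau_counit_left : ∀ (a : A) (b : B),
    (TensorProduct.lid k A)
        ((LinearMap.rTensor A (Coalgebra.counit : B →ₗ[k] k)) (τ (a ⊗ₜ[k] b)))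
      = (Coalgebra.counit : B →ₗ[k] k) b • a
  tau_counit_right : ∀ (a : A) (b : B),
    (TensorProduct.rid k B)
        ((LinearMap.lTensor B (Coalgebra.counit : A →ₗ[k] k)) (τ (a ⊗ₜ[k] b)))
      = (Coalgebra.counit : A →ₗ[k] k) a • b
  comul_mul : ∀ x y : A ⊗[k] B,
    smashComul k A B τ (smashMul k A B σ (x ⊗ₜ[k] y))
      = mul2 k (A ⊗[k] B) (smashMul k A B σ)
          ((smashComul k A B τ x) ⊗ₜ[k] (smashComul k A B τ y))
  comul_one : smashComul k A B τ ((1:A) ⊗ₜ[k] (1:B))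
      = ((1:A) ⊗ₜ[k] (1:B)) ⊗ₜ[k] ((1:A) ⊗ₜ[k] (1:B))
  counit_mul : ∀ x y : A ⊗[k] B,
    smashCounit k A B (smashMul k A B σ (x ⊗ₜ[k] y)) = smashCounit k A B x * smashCounit k A B y
  counit_one : smashCounit k A B ((1:A) ⊗ₜ[k] (1:B)) = 1

/-- `σ` is right conormal: `(ε_A ⊗ id_B) ∘ σ = id_B ⊗ ε_A`. -/
def RightConormal : Prop := ∀ (b : B) (a : A),
  (TensorProduct.lid k B)
      ((LinearMap.rTensor B (Coalgebra.counit : A →ₗ[k] k)) (σ (b ⊗ₜ[k] a)))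
    = (Coalgebra.counit : A →ₗ[k] k) a • b

/-- `σ` is left conormal: `(id_A ⊗ ε_B) ∘ σ = ε_B ⊗ id_A`. -/
def LeftConormal : Prop := ∀ (b : B) (a : A),
  (TensorProduct.rid k A)
      ((LinearMap.lTensor A (Coalgebra.counit : B →ₗ[k] k)) (σ (b ⊗ₜ[k] a)))
    = (Coalgebra.counit : B →ₗ[k] k) b • a

/-- `τ` is left normal: `τ(a ⊗ 1_B) = 1_B ⊗ a`. -/
def LeftNormal : Prop := ∀ a : A, τ (a ⊗ₜ[k] (1:B)) = (1:B) ⊗ₜ[k] a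

/-- `τ` is right normal: `τ(1_A ⊗ b) = b ⊗ 1_A`. -/
def RightNormal : Prop := ∀ b : B, τ ((1:A) ⊗ₜ[k] b) = b ⊗ₜ[k] (1:A)


/-! Apply `π_B ⊗ π_A` to the bialgebra identity `Δ((a ⊗ 1)(a' ⊗ b)) = Δ(a ⊗ 1) Δ(a' ⊗ b)`.
Counitality of `A` and `B` turns `(π_B ⊗ π_A) ∘ Δ` into `τ`. Since `Δ_B(1) = ε_A(1) (1 ⊗ 1)`,
the right legs of `Δ(a ⊗ 1)` have the form `α ⊗ 1`, and on products whose right factor has this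
shape, right conormality of `σ` makes `π_B ⊗ π_A` multiplicative into the algebra `B ⊗ A`.
Hence `τ(aa' ⊗ b) = τ(a ⊗ 1) τ(a' ⊗ b)` in `B ⊗ A`, which is the identity. -/

section

variable {k A B : Type*} [Field k] [Ring A] [Algebra k A] [Ring B] [Algebra k B]
  {σ : B ⊗[k] A →ₗ[k] A ⊗[k] B} {τ : A ⊗[k] B →ₗ[k] B ⊗[k] A}

open Coalgebra (counit comul Repr sum_counit_smul sum_tmul_counit_eq)

lemma Coalgebra.sum_counit_right_smul {C ι : Type*} [AddCommMonoid C] [Module k C]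
    [Coalgebra k C] {c : C} (r : Repr k c ι) :
    ∑ i ∈ r.index, counit (R := k) (r.right i) • r.left i = c := by
  simpa only [map_sum, _root_.TensorProduct.rid_tmul, one_smul]
    using congrArg (_root_.TensorProduct.rid k C) (sum_tmul_counit_eq (R := k) r)

lemma smashMul_tmul (a a' : A) (b b' : B) :
    smashMul k A B σ ((a ⊗ₜ[k] b) ⊗ₜ[k] (a' ⊗ₜ[k] b')) =
      TensorProduct.map (LinearMap.mulLeft k a) (LinearMap.mulRight k b') (σ (b ⊗ₜ[k] a')) := by
  simp only [smashMul, LinearMap.coe_comp, Function.comp_apply, LinearEquiv.coe_coe,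
    TensorProduct.assoc_tmul, TensorProduct.map_tmul, LinearMap.id_coe, id_eq,
    TensorProduct.assoc_symm_tmul]
  induction σ (b ⊗ₜ[k] a') using TensorProduct.induction_on with
  | zero => simp
  | tmul x y => simp [LinearMap.mul'_apply]
  | add x y hx hy => simp only [TensorProduct.add_tmul, TensorProduct.tmul_add, map_add, hx, hy]

lemma smashMul_tmul_one_tmul (hσ : ∀ a : A, σ ((1 : B) ⊗ₜ[k] a) = a ⊗ₜ[k] (1 : B))
    (a a' : A) (b' : B) :
    smashMul k A B σ ((a ⊗ₜ[k] (1 : B)) ⊗ₜ[k] (a' ⊗ₜ[k] b')) = (a * a') ⊗ₜ[k] b' := by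
  simp [smashMul_tmul, hσ]

@[simp]
lemma piA_tmul [Coalgebra k B] (a : A) (b : B) : piA k A B (a ⊗ₜ[k] b) = counit (R := k) b • a := by
  simp [piA]

@[simp]
lemma piB_tmul [Coalgebra k A] (a : A) (b : B) : piB k A B (a ⊗ₜ[k] b) = counit (R := k) a • b := by
  simp [piB]

lemma piA_smashMul_tmul_one [Coalgebra k B] (hσ : ∀ a : A, σ ((1 : B) ⊗ₜ[k] a) = a ⊗ₜ[k] (1 : B))
    (α : A) (y : A ⊗[k] B) :
    piA k A B (smashMul k A B σ ((α ⊗ₜ[k] (1 : B)) ⊗ₜ[k] y)) = α * piA k A B y := by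
  induction y using TensorProduct.induction_on with
  | zero => simp
  | add y y' hy hy' => simp only [TensorProduct.tmul_add, map_add, hy, hy', mul_add]
  | tmul a' b' => simp [smashMul_tmul_one_tmul hσ]

variable (k) in
def sandwich (x : A) (d : B) : B ⊗[k] A →ₗ[k] (A ⊗[k] B) ⊗[k] (A ⊗[k] B) :=
  TensorProduct.map (TensorProduct.mk k A B x) ((TensorProduct.mk k A B).flip d)

@[simp]
lemma sandwich_tmul (x : A) (d : B) (β : B) (α : A) :
    sandwich k x d (β ⊗ₜ[k] α) = (x ⊗ₜ[k] β) ⊗ₜ[k] (α ⊗ₜ[k] d) :=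
  rfl

lemma map_piB_piB_sandwich [Coalgebra k A] (x : A) (d : B) (t : B ⊗[k] A) :
    TensorProduct.map (piB k A B) (piB k A B) (sandwich k x d t) =
      counit (R := k) x •
        ((TensorProduct.rid k B (LinearMap.lTensor B (counit (R := k)) t)) ⊗ₜ[k] d) := by
  induction t using TensorProduct.induction_on with
  | zero => simp
  | tmul β α => simp [TensorProduct.smul_tmul', smul_comm (counit (R := k) α)]
  | add s s' hs hs' => simp only [map_add, TensorProduct.add_tmul, smul_add, hs, hs']

variable [Coalgebra k A] [Coalgebra k B]

lemma Coalgebra.sum_counit_mul_counit_smul_tmul {ι κ : Type*} {a : A} {b : B}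
    (ra : Repr k a ι) (rb : Repr k b κ) :
    ∑ i ∈ ra.index, ∑ j ∈ rb.index,
        (counit (R := k) (ra.left i) * counit (R := k) (rb.right j)) •
          (ra.right i ⊗ₜ[k] rb.left j) = a ⊗ₜ[k] b := by
  simp only [← TensorProduct.smul_tmul_smul, ← TensorProduct.tmul_sum, ← TensorProduct.sum_tmul,
    sum_counit_smul, sum_counit_right_smul]

lemma smashComul_tmul {ι κ : Type*} {a : A} {b : B} (ra : Repr k a ι) (rb : Repr k b κ) :
    smashComul k A B τ (a ⊗ₜ[k] b) =
      ∑ i ∈ ra.index, ∑ j ∈ rb.index,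
        sandwich k (ra.left i) (rb.right j) (τ (ra.right i ⊗ₜ[k] rb.left j)) := by
  simp only [smashComul, LinearMap.coe_comp, Function.comp_apply, LinearEquiv.coe_coe,
    TensorProduct.map_tmul, ← ra.eq, ← rb.eq, TensorProduct.sum_tmul, TensorProduct.tmul_sum,
    map_sum, TensorProduct.assoc_tmul, LinearMap.id_coe, id_eq, TensorProduct.assoc_symm_tmul]
  rw [Finset.sum_comm]
  refine Finset.sum_congr rfl fun i _ => Finset.sum_congr rfl fun j _ => ?_
  induction τ (ra.right i ⊗ₜ[k] rb.left j) using TensorProduct.induction_on with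
  | zero => simp
  | tmul β α => simp
  | add s s' hs hs' => simp only [TensorProduct.add_tmul, TensorProduct.tmul_add, map_add, hs, hs']

lemma map_piB_piA_sandwich (x : A) (d : B) (t : B ⊗[k] A) :
    TensorProduct.map (piB k A B) (piA k A B) (sandwich k x d t) =
      (counit (R := k) x * counit (R := k) d) • t := by
  induction t using TensorProduct.induction_on with
  | zero => simp
  | tmul β α =>
    simp only [sandwich_tmul, TensorProduct.map_tmul, piB_tmul, piA_tmul,
      TensorProduct.tmul_smul, ← TensorProduct.smul_tmul', smul_smul, mul_comm]
  | add s s' hs hs' => simp only [map_add, smul_add, hs, hs']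

lemma map_piB_piA_smashComul (x : A ⊗[k] B) :
    TensorProduct.map (piB k A B) (piA k A B) (smashComul k A B τ x) = τ x := by
  induction x using TensorProduct.induction_on with
  | zero => simp
  | add u v hu hv => simp only [map_add, hu, hv]
  | tmul a b =>
    rw [smashComul_tmul (Repr.arbitrary k a) (Repr.arbitrary k b),
      ← Coalgebra.sum_counit_mul_counit_smul_tmul (Repr.arbitrary k a) (Repr.arbitrary k b)]
    simp only [map_sum, map_smul, map_piB_piA_sandwich]

lemma map_piB_piB_smashComul_tmul
    (hτ : ∀ (a : A) (b : B),
      TensorProduct.rid k B (LinearMap.lTensor B (counit (R := k)) (τ (a ⊗ₜ[k] b))) =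
        counit (R := k) a • b)
    (a : A) (b : B) :
    TensorProduct.map (piB k A B) (piB k A B) (smashComul k A B τ (a ⊗ₜ[k] b)) =
      counit (R := k) a • comul (R := k) b := by
  let ra := Repr.arbitrary k a
  let rb := Repr.arbitrary k b
  have counit_eq : ∑ i ∈ ra.index, counit (R := k) (ra.left i) * counit (R := k) (ra.right i) =
      counit (R := k) a := by
    simpa only [map_sum, map_smul, smul_eq_mul]
      using congrArg (counit (R := k)) (sum_counit_smul ra)
  rw [smashComul_tmul ra rb, ← counit_eq, Finset.sum_smul, ← rb.eq]
  simp only [map_sum, map_piB_piB_sandwich, hτ, Finset.smul_sum, ← TensorProduct.smul_tmul',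
    smul_smul]

namespace IsSmashBiproduct

lemma counitA_one_mul_counitB_one (hsb : IsSmashBiproduct k A B σ τ) :
    counit (R := k) (1 : A) * counit (R := k) (1 : B) = 1 := by
  simpa [smashCounit, LinearMap.mul'_apply] using hsb.counit_one

lemma counitA_mul (hsb : IsSmashBiproduct k A B σ τ) (a a' : A) :
    counit (R := k) (a * a') =
      counit (R := k) (1 : B) * (counit (R := k) a * counit (R := k) a') := by
  have hε : counit (R := k) (1 : B) ≠ 0 :=
    right_ne_zero_of_mul_eq_one hsb.counitA_one_mul_counitB_one
  have h := hsb.counit_mul (a ⊗ₜ[k] (1 : B)) (a' ⊗ₜ[k] (1 : B))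
  simp only [smashMul_tmul_one_tmul hsb.sigma_one_right, smashCounit, LinearMap.coe_comp,
    Function.comp_apply, TensorProduct.map_tmul, LinearMap.mul'_apply] at h
  apply mul_right_cancel₀ hε
  linear_combination h

lemma comulB_one (hsb : IsSmashBiproduct k A B σ τ) :
    comul (R := k) (1 : B) = counit (R := k) (1 : A) • ((1 : B) ⊗ₜ[k] (1 : B)) := by
  have hε : counit (R := k) (1 : A) ≠ 0 :=
    left_ne_zero_of_mul_eq_one hsb.counitA_one_mul_counitB_one
  have h := congrArg (TensorProduct.map (piB k A B) (piB k A B)) hsb.comul_one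
  rw [map_piB_piB_smashComul_tmul hsb.tau_counit_right, TensorProduct.map_tmul, piB_tmul,
    TensorProduct.smul_tmul_smul, ← smul_smul] at h
  exact smul_right_injective _ hε h

lemma smashComul_tmul_one (hsb : IsSmashBiproduct k A B σ τ) {ι : Type*} {a : A}
    (ra : Repr k a ι) :
    smashComul k A B τ (a ⊗ₜ[k] (1 : B)) =
      counit (R := k) (1 : A) •
        ∑ i ∈ ra.index, sandwich k (ra.left i) (1 : B) (τ (ra.right i ⊗ₜ[k] (1 : B))) := by
  let r1 : Repr k (1 : B) Unit :=
    ⟨Finset.univ, fun _ => counit (R := k) (1 : A) • (1 : B), fun _ => 1,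
      by simp [hsb.comulB_one, TensorProduct.smul_tmul']⟩
  rw [smashComul_tmul ra r1]
  simp [r1, Finset.smul_sum, TensorProduct.tmul_smul]

lemma piB_smashMul_tmul (hsb : IsSmashBiproduct k A B σ τ) (hrc : RightConormal k A B σ)
    (a a' : A) (b b' : B) :
    piB k A B (smashMul k A B σ ((a ⊗ₜ[k] b) ⊗ₜ[k] (a' ⊗ₜ[k] b'))) =
      counit (R := k) (1 : B) • (piB k A B (a ⊗ₜ[k] b) * piB k A B (a' ⊗ₜ[k] b')) := by
  have piB_map : ∀ t : A ⊗[k] B,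
      piB k A B (TensorProduct.map (LinearMap.mulLeft k a) (LinearMap.mulRight k b') t) =
        (counit (R := k) (1 : B) * counit (R := k) a) •
          (TensorProduct.lid k B (LinearMap.rTensor B (counit (R := k)) t) * b') := by
    intro t
    induction t using TensorProduct.induction_on with
    | zero => simp
    | tmul α β =>
      simp only [TensorProduct.map_tmul, LinearMap.mulLeft_apply, LinearMap.mulRight_apply,
        piB_tmul, LinearMap.rTensor_tmul, TensorProduct.lid_tmul, hsb.counitA_mul,
        smul_mul_assoc, smul_smul]
      ring_nf
    | add t t' ht ht' => simp only [map_add, add_mul, smul_add, ht, ht']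
  rw [smashMul_tmul, piB_map, hrc]
  simp only [piB_tmul, smul_mul_assoc, mul_smul_comm, smul_smul]
  ring_nf

lemma piB_smashMul (hsb : IsSmashBiproduct k A B σ τ) (hrc : RightConormal k A B σ)
    (x y : A ⊗[k] B) :
    piB k A B (smashMul k A B σ (x ⊗ₜ[k] y)) =
      counit (R := k) (1 : B) • (piB k A B x * piB k A B y) := by
  induction x using TensorProduct.induction_on with
  | zero => simp
  | add x x' hx hx' => simp only [TensorProduct.add_tmul, map_add, hx, hx', add_mul, smul_add]
  | tmul a b =>
    induction y using TensorProduct.induction_on with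
    | zero => simp
    | add y y' hy hy' => simp only [TensorProduct.tmul_add, map_add, hy, hy', mul_add, smul_add]
    | tmul a' b' => exact hsb.piB_smashMul_tmul hrc a a' b b'

lemma map_piB_piA_mul2_sandwich_one (hsb : IsSmashBiproduct k A B σ τ)
    (hrc : RightConormal k A B σ) (x : A) (t : B ⊗[k] A) (Y : (A ⊗[k] B) ⊗[k] (A ⊗[k] B)) :
    TensorProduct.map (piB k A B) (piA k A B)
        (mul2 k (A ⊗[k] B) (smashMul k A B σ) (sandwich k x (1 : B) t ⊗ₜ[k] Y)) =
      (counit (R := k) x * counit (R := k) (1 : B)) •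
        (t * TensorProduct.map (piB k A B) (piA k A B) Y) := by
  induction t using TensorProduct.induction_on with
  | zero => simp
  | add t t' ht ht' => simp only [map_add, TensorProduct.add_tmul, add_mul, smul_add, ht, ht']
  | tmul β α =>
    induction Y using TensorProduct.induction_on with
    | zero => simp
    | add Y Y' hY hY' => simp only [TensorProduct.tmul_add, map_add, mul_add, smul_add, hY, hY']
    | tmul y y' =>
      simp only [sandwich_tmul, mul2, LinearMap.coe_comp, Function.comp_apply,
        LinearEquiv.coe_coe, TensorProduct.tensorTensorTensorComm_tmul, TensorProduct.map_tmul,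
        hsb.piB_smashMul hrc, piA_smashMul_tmul_one hsb.sigma_one_right, piB_tmul,
        Algebra.TensorProduct.tmul_mul_tmul]
      rw [smul_mul_assoc, smul_smul, ← TensorProduct.smul_tmul', mul_comm]

lemma map_piB_piA_mul2_smashComul_tmul_one (hsb : IsSmashBiproduct k A B σ τ)
    (hrc : RightConormal k A B σ) (a : A) (Y : (A ⊗[k] B) ⊗[k] (A ⊗[k] B)) :
    TensorProduct.map (piB k A B) (piA k A B)
        (mul2 k (A ⊗[k] B) (smashMul k A B σ) (smashComul k A B τ (a ⊗ₜ[k] (1 : B)) ⊗ₜ[k] Y)) =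
      τ (a ⊗ₜ[k] (1 : B)) * TensorProduct.map (piB k A B) (piA k A B) Y := by
  let ra := Repr.arbitrary k a
  conv_rhs => rw [← sum_counit_smul ra]
  rw [hsb.smashComul_tmul_one ra, ← TensorProduct.smul_tmul']
  simp only [TensorProduct.sum_tmul, map_smul, map_sum, hsb.map_piB_piA_mul2_sandwich_one hrc,
    ← TensorProduct.smul_tmul', Finset.sum_mul, Finset.smul_sum, smul_mul_assoc, smul_smul]
  refine Finset.sum_congr rfl fun i _ => ?_
  congr 1
  linear_combination counit (R := k) (ra.left i) * hsb.counitA_one_mul_counitB_one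

theorem tau_mul_tmul (hsb : IsSmashBiproduct k A B σ τ) (hrc : RightConormal k A B σ)
    (a a' : A) (b : B) :
    τ ((a * a') ⊗ₜ[k] b) = τ (a ⊗ₜ[k] (1 : B)) * τ (a' ⊗ₜ[k] b) := by
  calc τ ((a * a') ⊗ₜ[k] b)
      = TensorProduct.map (piB k A B) (piA k A B)
          (smashComul k A B τ (smashMul k A B σ ((a ⊗ₜ[k] (1 : B)) ⊗ₜ[k] (a' ⊗ₜ[k] b)))) := by
        rw [smashMul_tmul_one_tmul hsb.sigma_one_right, map_piB_piA_smashComul]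
    _ = τ (a ⊗ₜ[k] (1 : B)) *
          TensorProduct.map (piB k A B) (piA k A B) (smashComul k A B τ (a' ⊗ₜ[k] b)) := by
        rw [hsb.comul_mul, hsb.map_piB_piA_mul2_smashComul_tmul_one hrc]
    _ = τ (a ⊗ₜ[k] (1 : B)) * τ (a' ⊗ₜ[k] b) := by
        rw [map_piB_piA_smashComul]

end IsSmashBiproduct

end

/-- Identity (B8.1): if `σ` is right conormal then
`Σ b_τ ⊗ (aa')_τ = Σ 1_{Bτ₁}b_{τ₂} ⊗ a_{τ₁}a'_{τ₂}`. -/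
theorem stmt8 (hsb : IsSmashBiproduct k A B σ τ)
    (hrc : RightConormal k A B σ)
    (a a' : A) (b : B)
    (ι₁ ι₂ : Type) [Fintype ι₁] [Fintype ι₂]
    (bt : ι₁ → B) (at' : ι₁ → A)
    (hτ1 : τ (a ⊗ₜ[k] (1:B)) = ∑ t : ι₁, bt t ⊗ₜ[k] at' t)
    (bu : ι₂ → B) (au : ι₂ → A)
    (hτ2 : τ (a' ⊗ₜ[k] b) = ∑ u : ι₂, bu u ⊗ₜ[k] au u) :
    τ ((a * a') ⊗ₜ[k] b) = ∑ t : ι₁, ∑ u : ι₂, (bt t * bu u) ⊗ₜ[k] (at' t * au u) := by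
  rw [hsb.tau_mul_tmul hrc, hτ1, hτ2, Finset.sum_mul_sum]
  simp only [Algebra.TensorProduct.tmul_mul_tmul]

end
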